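/- Let d ≥ 1, λ ≥ 0, K ≥ 0, and let φ : ℝ^d → ℝ be K-Lipschitz and λ-concave. Then for every t > 0 the Hopf–Lax function u_t is λ/(1+λt)-concave, i.e. x ↦ u_t(x) − (λ/(2(1+λt)))‖x‖² is concave on ℝ^d. -/

import Mathlib

/-!
Write `s = 1 + λt` and `ψ = φ - (λ/2)‖·‖²`, which is concave. Completing the square,
`‖x - y‖²/(2t) + φ y - λ/(2s) ‖x‖² = ψ y + s/(2t) ‖y - x/s‖²`, so substituting `y = x/s + w`,
`u_t x - λ/(2s) ‖x‖² = ⨅ w, ψ (x/s + w) + s/(2t) ‖w‖²`.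
For fixed `w` the right-hand term is concave in `x` (`ψ` after an affine map), and an infimum of
concave functions is concave as long as it is bounded below, which the Lipschitz bound on `φ`
guarantees.
-/

open scoped RealInnerProductSpace
noncomputable section

/-- The Hopf–Lax function `u_t(x) = inf_y (‖x−y‖²/(2t) + φ(y))`. -/
def hopfLax {d : ℕ} (φ : EuclideanSpace ℝ (Fin d) → ℝ) (t : ℝ)
    (x : EuclideanSpace ℝ (Fin d)) : ℝ :=
  ⨅ y : EuclideanSpace ℝ (Fin d), (‖x - y‖ ^ 2 / (2 * t) + φ y)

theorem concaveOn_ciInf {ι E : Type*} [Nonempty ι] [AddCommMonoid E] [Module ℝ E]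
    {s : Set E} {f : ι → E → ℝ} (hs : Convex ℝ s) (hf : ∀ i, ConcaveOn ℝ s (f i))
    (hbdd : ∀ x ∈ s, BddBelow (Set.range fun i => f i x)) :
    ConcaveOn ℝ s fun x => ⨅ i, f i x := by
  refine ⟨hs, fun x hx y hy a b ha hb hab => le_ciInf fun i => ?_⟩
  calc a • (⨅ i, f i x) + b • (⨅ i, f i y)
      ≤ a • f i x + b • f i y := by
        gcongr
        exacts [ciInf_le (hbdd x hx) i, ciInf_le (hbdd y hy) i]
    _ ≤ f i (a • x + b • y) := (hf i).2 hx hy ha hb hab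

theorem sub_le_norm_sub_sq_div_add_of_lipschitz {E : Type*} [SeminormedAddCommGroup E]
    {φ : E → ℝ} {K t : ℝ} (ht : 0 < t) (hLip : ∀ y z, |φ y - φ z| ≤ K * ‖y - z‖) (x y : E) :
    φ x - K ^ 2 * t / 2 ≤ ‖x - y‖ ^ 2 / (2 * t) + φ y := by
  have hφ : φ x - φ y ≤ K * ‖x - y‖ := (abs_le.mp (hLip x y)).2
  have hAMGM : K * ‖x - y‖ - K ^ 2 * t / 2 ≤ ‖x - y‖ ^ 2 / (2 * t) := by
    rw [le_div_iff₀ (by positivity)]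
    nlinarith [sq_nonneg (‖x - y‖ - K * t)]
  linarith

section InnerProductSpace

variable {E : Type*} [NormedAddCommGroup E] [InnerProductSpace ℝ E]

theorem norm_sub_sq_div_add_norm_sq_eq {lam t : ℝ} (ht : t ≠ 0) (hs : 1 + lam * t ≠ 0)
    (x y : E) :
    ‖x - y‖ ^ 2 / (2 * t) + lam / 2 * ‖y‖ ^ 2
      = lam / (2 * (1 + lam * t)) * ‖x‖ ^ 2
        + (1 + lam * t) / (2 * t) * ‖y - (1 + lam * t)⁻¹ • x‖ ^ 2 := by
  rw [norm_sub_sq_real, norm_sub_sq_real, real_inner_smul_right, norm_smul, mul_pow, norm_inv,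
    real_inner_comm y x, Real.norm_eq_abs, inv_pow, sq_abs]
  generalize hs_def : 1 + lam * t = s at hs ⊢
  field_simp
  rw [← hs_def]
  ring

theorem hopfLax_integrand_sub_eq (φ : E → ℝ) {lam t : ℝ} (ht : t ≠ 0) (hs : 1 + lam * t ≠ 0)
    (x w : E) :
    ‖x - ((1 + lam * t)⁻¹ • x + w)‖ ^ 2 / (2 * t) + φ ((1 + lam * t)⁻¹ • x + w)
        - lam / (2 * (1 + lam * t)) * ‖x‖ ^ 2
      = φ ((1 + lam * t)⁻¹ • x + w) - lam / 2 * ‖(1 + lam * t)⁻¹ • x + w‖ ^ 2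
        + (1 + lam * t) / (2 * t) * ‖w‖ ^ 2 := by
  have hsq := norm_sub_sq_div_add_norm_sq_eq ht hs x ((1 + lam * t)⁻¹ • x + w)
  rw [add_sub_cancel_left] at hsq
  linarith

end InnerProductSpace

theorem hopfLax_sub_eq_ciInf {d : ℕ} {φ : EuclideanSpace ℝ (Fin d) → ℝ} {lam K t : ℝ}
    (ht : 0 < t) (hs : 1 + lam * t ≠ 0) (hLip : ∀ y z, |φ y - φ z| ≤ K * ‖y - z‖)
    (x : EuclideanSpace ℝ (Fin d)) :
    hopfLax φ t x - lam / (2 * (1 + lam * t)) * ‖x‖ ^ 2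
      = ⨅ w, (φ ((1 + lam * t)⁻¹ • x + w) - lam / 2 * ‖(1 + lam * t)⁻¹ • x + w‖ ^ 2
          + (1 + lam * t) / (2 * t) * ‖w‖ ^ 2) := by
  have hbdd : BddBelow (Set.range fun y => ‖x - y‖ ^ 2 / (2 * t) + φ y) :=
    ⟨φ x - K ^ 2 * t / 2,
      Set.forall_mem_range.2 (sub_le_norm_sub_sq_div_add_of_lipschitz ht hLip x)⟩
  rw [hopfLax, ciInf_sub hbdd, ← (Equiv.addLeft ((1 + lam * t)⁻¹ • x)).iInf_comp]
  congr 1 with w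
  exact hopfLax_integrand_sub_eq φ ht.ne' hs x w

theorem stmt0 (d : ℕ) (lam K : ℝ) (hlam : 0 ≤ lam)
    (φ : EuclideanSpace ℝ (Fin d) → ℝ)
    (hLip : ∀ y z, |φ y - φ z| ≤ K * ‖y - z‖)
    (hConc : ConcaveOn ℝ Set.univ (fun y => φ y - lam / 2 * ‖y‖ ^ 2))
    (t : ℝ) (ht : 0 < t) :
    ConcaveOn ℝ Set.univ
      (fun x => hopfLax φ t x - lam / (2 * (1 + lam * t)) * ‖x‖ ^ 2) := by
  have hs : 1 + lam * t ≠ 0 := by positivity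
  refine (concaveOn_ciInf convex_univ (fun w => ?_) fun x _ => ?_).congr
    fun x _ => (hopfLax_sub_eq_ciInf ht hs hLip x).symm
  · exact (hConc.comp_affineMap (((1 + lam * t)⁻¹ • LinearMap.id).toAffineMap
      + AffineMap.const ℝ _ w)).add_const _
  · refine ⟨φ x - K ^ 2 * t / 2 - lam / (2 * (1 + lam * t)) * ‖x‖ ^ 2,
      Set.forall_mem_range.2 fun w => ?_⟩
    have hlower := sub_le_norm_sub_sq_div_add_of_lipschitz ht hLip x ((1 + lam * t)⁻¹ • x + w)
    have hshift := hopfLax_integrand_sub_eq φ ht.ne' hs x w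
    linarith
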